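/- arXiv:2506.12534 — 2 statements merged into one kernel-verified Lean document; each statement's English description precedes it below -/
import Mathlib

section
/- Let E = EuclideanSpace ℝ (Fin n), μ a Borel probability measure on E satisfying the standing integrability assumption, u ∈ E, and q ∈ E a point with μ({q}) = 0. Then G_u is differentiable at q with gradient ∫ ((q − x)/‖q − x‖ − u) dμ(x) (the integrand assigned the value −u at the μ-null point x = q); that is, HasGradientAt G_u (∫ Ψ dμ) q where Ψ(x) = (q − x)/‖q − x‖ − u. (Euclidean, pointwise case of Lemma A.3(a): differentiability of the population loss at non-atoms.) -/
/-! Away from `x = q`, the loss `p ↦ ρ_u(x, p)` is differentiable at `q` with gradient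
`(q - x)/‖q - x‖ - u`, and since `q` is not an atom this holds for `μ`-almost every `x`.
Uniformly in `x` the loss is `(1 + ‖u‖)`-Lipschitz in `p`, so a constant dominates the
difference quotients and the gradient may be taken under the integral sign. The integrability
needed to start comes from the standing assumption: `(1 - ‖u₀‖)‖v‖ ≤ ‖v‖ - ⟪u₀, v⟫` makes
`x ↦ p₀ - x`, hence every `x ↦ q - x`, integrable. -/

open MeasureTheory Filter Topology

/-- The data-based geometric quantile loss in Euclidean space:
`ρ_u(x,p) = ‖p − x‖ − ⟪u, p − x⟫`. -/
noncomputable def quantileLoss {n : ℕ} (u x p : EuclideanSpace ℝ (Fin n)) : ℝ :=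
  ‖p - x‖ - inner ℝ u (p - x)

open InnerProductSpace

section InnerProductSpace

variable {E : Type*} [NormedAddCommGroup E] [InnerProductSpace ℝ E]

theorem hasGradientAt_norm [CompleteSpace E] {x : E} (hx : x ≠ 0) :
    HasGradientAt (‖·‖) (‖x‖⁻¹ • x) x := by
  have h := (Real.hasDerivAt_sqrt (pow_ne_zero 2 (norm_ne_zero_iff.2 hx))).comp_hasFDerivAt x
    (hasStrictFDerivAt_norm_sq x).hasFDerivAt
  simp only [Function.comp_def, Real.sqrt_sq (norm_nonneg _)] at h
  refine h.congr_fderiv ?_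
  ext v
  simp only [toDual_apply_apply, coe_innerSL_apply, smul_apply, map_smul, smul_eq_mul,
    nsmul_eq_mul, Nat.cast_ofNat]
  field_simp

theorem mul_norm_le_norm_sub_inner (u v : E) : (1 - ‖u‖) * ‖v‖ ≤ ‖v‖ - ⟪u, v⟫_ℝ := by
  linarith [real_inner_le_norm u v]

theorem norm_inv_norm_smul_le_one (v : E) : ‖‖v‖⁻¹ • v‖ ≤ 1 := by
  rcases eq_or_ne v 0 with rfl | hv
  · simp
  · rw [norm_smul, norm_inv, norm_norm, inv_mul_cancel₀ (norm_ne_zero_iff.2 hv)]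

variable {α : Type*} [MeasurableSpace α] {μ : Measure α}

theorem hasGradientAt_integral_of_dominated_loc_of_lip' [CompleteSpace E] {F : E → α → ℝ}
    {F' : α → E} {x₀ : E} {s : Set E} {bound : α → ℝ} (hs : s ∈ 𝓝 x₀)
    (hF_meas : ∀ x ∈ s, AEStronglyMeasurable (F x) μ) (hF_int : Integrable (F x₀) μ)
    (hF'_int : Integrable F' μ)
    (h_lipsch : ∀ᵐ a ∂μ, ∀ x ∈ s, ‖F x a - F x₀ a‖ ≤ bound a * ‖x - x₀‖)
    (bound_integrable : Integrable bound μ)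
    (h_diff : ∀ᵐ a ∂μ, HasGradientAt (F · a) (F' a) x₀) :
    HasGradientAt (fun x ↦ ∫ a, F x a ∂μ) (∫ a, F' a ∂μ) x₀ := by
  change HasFDerivAt _ (innerSL ℝ (∫ a, F' a ∂μ)) x₀
  rw [← ContinuousLinearMap.integral_comp_comm _ hF'_int]
  exact (hasFDerivAt_integral_of_dominated_loc_of_lip' hs hF_meas hF_int
    ((innerSL ℝ).continuous.comp_aestronglyMeasurable hF'_int.1) h_lipsch bound_integrable
    h_diff).2

theorem integrable_inv_norm_smul_sub_const [IsFiniteMeasure μ] {f : α → E}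
    (hf : AEStronglyMeasurable f μ) (u : E) :
    Integrable (fun a ↦ ‖f a‖⁻¹ • f a - u) μ := by
  refine .of_bound (by fun_prop) (1 + ‖u‖) (.of_forall fun a ↦ ?_)
  exact (norm_sub_le _ _).trans (add_le_add_left (norm_inv_norm_smul_le_one (f a)) _)

end InnerProductSpace

section QuantileLoss

variable {n : ℕ} {μ : Measure (EuclideanSpace ℝ (Fin n))}

theorem continuous_quantileLoss_left (u p : EuclideanSpace ℝ (Fin n)) :
    Continuous fun x ↦ quantileLoss u x p := by
  unfold quantileLoss
  fun_prop

theorem lipschitzWith_quantileLoss (u x : EuclideanSpace ℝ (Fin n)) :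
    LipschitzWith (1 + ‖u‖₊) (quantileLoss u x) := by
  refine LipschitzWith.of_dist_le_mul fun p q ↦ ?_
  have hnorm : |‖p - x‖ - ‖q - x‖| ≤ ‖p - q‖ := by
    simpa using abs_norm_sub_norm_le (p - x) (q - x)
  have hsub : quantileLoss u x p - quantileLoss u x q = ‖p - x‖ - ‖q - x‖ - ⟪u, p - q⟫_ℝ := by
    simp only [quantileLoss, ← sub_sub_sub_cancel_right p q x, inner_sub_right]
    ring
  rw [Real.dist_eq, dist_eq_norm, hsub, NNReal.coe_add, NNReal.coe_one, coe_nnnorm]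
  calc |‖p - x‖ - ‖q - x‖ - ⟪u, p - q⟫_ℝ| ≤ |‖p - x‖ - ‖q - x‖| + |⟪u, p - q⟫_ℝ| := abs_sub _ _
    _ ≤ ‖p - q‖ + ‖u‖ * ‖p - q‖ := add_le_add hnorm (abs_real_inner_le_norm u (p - q))
    _ = (1 + ‖u‖) * ‖p - q‖ := by ring

theorem hasGradientAt_quantileLoss (u : EuclideanSpace ℝ (Fin n))
    {x q : EuclideanSpace ℝ (Fin n)} (hxq : x ≠ q) :
    HasGradientAt (quantileLoss u x) (‖q - x‖⁻¹ • (q - x) - u) q := by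
  have hnorm := (hasGradientAt_norm (sub_ne_zero.2 hxq.symm)).hasFDerivAt
  have hinner := (toDual ℝ _ u).hasFDerivAt (x := q - x)
  rw [hasGradientAt_iff_hasFDerivAt, map_sub]
  refine ((hnorm.sub hinner).comp q ((hasFDerivAt_id q).sub_const x)).congr_fderiv ?_
  ext
  simp

theorem integrable_sub_of_integrable_quantileLoss {u p : EuclideanSpace ℝ (Fin n)}
    (hu : ‖u‖ < 1) (h : Integrable (fun x ↦ quantileLoss u x p) μ) :
    Integrable (fun x ↦ p - x) μ := by
  have hmeas : AEStronglyMeasurable (fun x ↦ p - x) μ := by fun_prop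
  refine (integrable_norm_iff hmeas).1 <| (h.const_mul (1 - ‖u‖)⁻¹).mono' hmeas.norm ?_
  refine .of_forall fun x ↦ ?_
  rw [norm_norm, le_inv_mul_iff₀ (sub_pos.2 hu)]
  exact mul_norm_le_norm_sub_inner u (p - x)

theorem integrable_quantileLoss {p : EuclideanSpace ℝ (Fin n)} (h : Integrable (fun x ↦ p - x) μ)
    (u : EuclideanSpace ℝ (Fin n)) : Integrable (fun x ↦ quantileLoss u x p) μ :=
  h.norm.sub (h.const_inner u)

end QuantileLoss

/-- Euclidean, pointwise case of Lemma A.3(a): at any point `q` which is not an atom of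
`μ`, the population loss `G_u` is differentiable with gradient
`∫ ((q − x)/‖q − x‖ − u) dμ(x)` (the integrand being `−u` at the null point `x = q`). -/
theorem hasGradientAt_quantileObjective
    {n : ℕ} (μ : Measure (EuclideanSpace ℝ (Fin n))) [IsProbabilityMeasure μ]
    (hμint : ∃ (u₀ p₀ : EuclideanSpace ℝ (Fin n)), ‖u₀‖ < 1 ∧
      Integrable (fun x => quantileLoss u₀ x p₀) μ)
    (u : EuclideanSpace ℝ (Fin n))
    (q : EuclideanSpace ℝ (Fin n)) (hq : μ {q} = 0) :
    HasGradientAt (fun p => ∫ x, quantileLoss u x p ∂μ)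
      (∫ x, (‖q - x‖⁻¹ • (q - x) - u) ∂μ) q := by
  obtain ⟨u₀, p₀, hu₀, hint⟩ := hμint
  have hsub : Integrable (fun x ↦ q - x) μ :=
    ((integrable_const (q - p₀)).add (integrable_sub_of_integrable_quantileLoss hu₀ hint)).congr
      (.of_forall fun x ↦ sub_add_sub_cancel q p₀ x)
  have hne : ∀ᵐ x ∂μ, x ≠ q := measure_eq_zero_iff_ae_notMem.1 hq
  refine hasGradientAt_integral_of_dominated_loc_of_lip' (bound := fun _ ↦ 1 + ‖u‖) univ_mem
    (fun p _ ↦ (continuous_quantileLoss_left u p).aestronglyMeasurable)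
    (integrable_quantileLoss hsub u) (integrable_inv_norm_smul_sub_const (by fun_prop) u)
    (.of_forall fun x p _ ↦ ?_) (integrable_const _) (hne.mono fun x ↦ hasGradientAt_quantileLoss u)
  simpa [dist_eq_norm] using (lipschitzWith_quantileLoss u x).dist_le_mul p q
end

section
/- Let E = EuclideanSpace ℝ (Fin n), N ≥ 1, u ∈ E with β := ‖u‖ < 1. Set N' := ⌈(1 − β)N/2⌉ − 1 and α := (1 − β)N/2 − N' (so α ∈ (0, 1]). Let X : Fin N → E be a sample, q̂ a minimizer of the empirical loss of X, l := max_i ρ_u(X_i, q̂) and R := l/(1 − β). If Y : Fin N → E differs from X in at most N' coordinates (card {i : Y_i ≠ X_i} ≤ N') and q̂' is any minimizer of the empirical loss of Y, then ‖q̂ − q̂'‖ ≤ R · max{2, (1 − β²)N/(2α) + (1 − β)}. (Euclidean case of Lemma A.4 with the explicit constant from its proof: corrupting fewer than ⌈(1 − β)N/2⌉ points cannot move the sample quantile beyond an explicit bound, so the breakdown point of any sample u-quantile function is at least ⌈(1 − β)N/2⌉/N.) -/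
open MeasureTheory Filter Topology

lemma le_sum_of_le_of_forall_notMem_le {R ι : Type*} [Ring R] [LinearOrder R] [IsOrderedRing R]
    [Fintype ι] [DecidableEq ι] {f : ι → R} {S : Finset ι} {k : ℕ} {a b : R} (hab : a ≤ b)
    (hS : S.card ≤ k) (ha : ∀ i, a ≤ f i) (hb : ∀ i ∉ S, b ≤ f i) :
    k * a + (Fintype.card ι - k) * b ≤ ∑ i, f i := by
  have hS' : S.card • a ≤ ∑ i ∈ S, f i := S.card_nsmul_le_sum f a fun i _ ↦ ha i
  have hSc : Sᶜ.card • b ≤ ∑ i ∈ Sᶜ, f i :=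
    Sᶜ.card_nsmul_le_sum f b fun i hi ↦ hb i (Finset.mem_compl.mp hi)
  have hk : (S.card : R) * (b - a) ≤ k * (b - a) :=
    mul_le_mul_of_nonneg_right (Nat.mono_cast hS) (sub_nonneg.mpr hab)
  rw [← S.sum_add_sum_compl f]
  rw [nsmul_eq_mul] at hS' hSc
  rw [Finset.card_compl, Nat.cast_sub S.card_le_univ] at hSc
  calc (k : R) * a + (Fintype.card ι - k) * b
      = Fintype.card ι * b - k * (b - a) := by noncomm_ring
    _ ≤ Fintype.card ι * b - S.card * (b - a) := sub_le_sub_left hk _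
    _ = S.card * a + (Fintype.card ι - S.card) * b := by noncomm_ring
    _ ≤ _ := add_le_add hS' hSc

section QuantileLoss

variable {n : ℕ} {u : EuclideanSpace ℝ (Fin n)}

lemma one_sub_norm_mul_norm_sub_le_quantileLoss (u x p : EuclideanSpace ℝ (Fin n)) :
    (1 - ‖u‖) * ‖p - x‖ ≤ quantileLoss u x p := by
  have := real_inner_le_norm u (p - x)
  unfold quantileLoss
  linarith

lemma quantileLoss_nonneg (hu : ‖u‖ ≤ 1) (x p : EuclideanSpace ℝ (Fin n)) :
    0 ≤ quantileLoss u x p :=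
  (mul_nonneg (sub_nonneg.mpr hu) (norm_nonneg _)).trans
    (one_sub_norm_mul_norm_sub_le_quantileLoss u x p)

lemma quantileLoss_sub_quantileLoss_le (u x p q : EuclideanSpace ℝ (Fin n)) :
    quantileLoss u x p - quantileLoss u x q ≤ (1 + ‖u‖) * ‖p - q‖ := by
  have hnorm : ‖p - x‖ - ‖q - x‖ ≤ ‖p - q‖ := by
    simpa using norm_sub_norm_le (p - x) (q - x)
  have hinner : inner ℝ u (q - x) - inner ℝ u (p - x) ≤ ‖u‖ * ‖p - q‖ := by
    rw [← inner_sub_right, ← norm_neg (p - q), neg_sub]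
    simpa using real_inner_le_norm u (q - x - (p - x))
  unfold quantileLoss
  linarith

lemma one_sub_norm_mul_norm_sub_le_quantileLoss_add (hu : ‖u‖ ≤ 1)
    (x p q : EuclideanSpace ℝ (Fin n)) :
    (1 - ‖u‖) * ‖p - q‖ ≤ quantileLoss u x p + quantileLoss u x q := by
  calc (1 - ‖u‖) * ‖p - q‖ ≤ (1 - ‖u‖) * ‖p - x‖ + (1 - ‖u‖) * ‖q - x‖ := by
        rw [← mul_add, ← norm_neg (q - x), neg_sub]
        exact mul_le_mul_of_nonneg_left (norm_sub_le_norm_sub_add_norm_sub p x q)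
          (sub_nonneg.mpr hu)
    _ ≤ _ := add_le_add (one_sub_norm_mul_norm_sub_le_quantileLoss u x p)
        (one_sub_norm_mul_norm_sub_le_quantileLoss u x q)

lemma le_sum_quantileLoss_sub_of_ncard_ne_le {ι : Type*} [Fintype ι] (hu : ‖u‖ ≤ 1)
    {X Y : ι → EuclideanSpace ℝ (Fin n)} {q q' : EuclideanSpace ℝ (Fin n)} {l : ℝ} {k : ℕ}
    (hl : ∀ i, quantileLoss u (X i) q ≤ l) (hY : {i | Y i ≠ X i}.ncard ≤ k)
    (hfar : 2 * l ≤ (1 - ‖u‖) * ‖q - q'‖) :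
    k * -((1 + ‖u‖) * ‖q - q'‖) + (Fintype.card ι - k) * ((1 - ‖u‖) * ‖q - q'‖ - 2 * l)
      ≤ ∑ i, (quantileLoss u (Y i) q' - quantileLoss u (Y i) q) := by
  classical
  refine le_sum_of_le_of_forall_notMem_le (S := {i | Y i ≠ X i}) ?_ ?_ (fun i ↦ ?_) (fun i hi ↦ ?_)
  · have : 0 ≤ (1 + ‖u‖) * ‖q - q'‖ := by positivity
    linarith
  · simpa [← Set.ncard_coe_finset] using hY
  · linarith [quantileLoss_sub_quantileLoss_le u (Y i) q q']
  · have hYi : Y i = X i := by simpa using hi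
    rw [hYi]
    linarith [one_sub_norm_mul_norm_sub_le_quantileLoss_add hu (X i) q q', hl i]

end QuantileLoss

theorem sample_quantile_breakdown_lower_bound_general
    {n : ℕ} (N : ℕ) [NeZero N]
    (u : EuclideanSpace ℝ (Fin n)) (β : ℝ) (hβ : β = ‖u‖) (hu : β < 1)
    (N' : ℕ) (hN' : N' = ⌈(1 - β) * N / 2⌉₊ - 1)
    (α : ℝ) (hα : α = (1 - β) * N / 2 - N')
    (X : Fin N → EuclideanSpace ℝ (Fin n))
    (qhat : EuclideanSpace ℝ (Fin n))
    (l R : ℝ) (hl : l = ⨆ i, quantileLoss u (X i) qhat) (hR : R = l / (1 - β))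
    (Y : Fin N → EuclideanSpace ℝ (Fin n))
    (hY : Set.ncard {i : Fin N | Y i ≠ X i} ≤ N')
    (qhat' : EuclideanSpace ℝ (Fin n))
    (hqhat' : ∀ p : EuclideanSpace ℝ (Fin n),
      (N : ℝ)⁻¹ * ∑ i, quantileLoss u (Y i) qhat'
        ≤ (N : ℝ)⁻¹ * ∑ i, quantileLoss u (Y i) p) :
    ‖qhat - qhat'‖ ≤ R * max 2 ((1 - β ^ 2) * N / (2 * α) + (1 - β)) := by
  subst hβ
  have hβ1 : 0 < 1 - ‖u‖ := sub_pos.mpr hu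
  have hN : 0 < (N : ℝ) := Nat.cast_pos.mpr (NeZero.pos N)
  have hα0 : 0 < α := by
    have hceil : ⌈(1 - ‖u‖) * N / 2⌉₊ ≠ 0 := (Nat.ceil_pos.mpr (by positivity)).ne'
    rw [hα, hN', sub_pos]
    exact ((Nat.ceil_eq_iff hceil).mp rfl).1
  have hlX (i : Fin N) : quantileLoss u (X i) qhat ≤ l := by
    rw [hl]; exact le_ciSup (Set.finite_range fun i ↦ quantileLoss u (X i) qhat).bddAbove i
  have hlR : l = R * (1 - ‖u‖) := by rw [hR]; field_simp
  have hR0 : 0 ≤ R := hR ▸ div_nonneg ((quantileLoss_nonneg hu.le _ _).trans (hlX 0)) hβ1.le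
  rcases le_or_gt ‖qhat - qhat'‖ (2 * R) with hnear | hfar
  · exact hnear.trans (mul_comm 2 R ▸ mul_le_mul_of_nonneg_left (le_max_left _ _) hR0)
  have hmin : ∑ i, (quantileLoss u (Y i) qhat' - quantileLoss u (Y i) qhat) ≤ 0 := by
    rw [Finset.sum_sub_distrib, sub_nonpos]
    exact le_of_mul_le_mul_left (hqhat' qhat) (inv_pos.mpr hN)
  have hsum := le_sum_quantileLoss_sub_of_ncard_ne_le hu.le hlX hY (by
    rw [hlR]; linarith [mul_le_mul_of_nonneg_left hfar.le hβ1.le])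
  rw [Fintype.card_fin] at hsum
  have hαD : α * ‖qhat - qhat'‖ ≤ α * (R * ((1 - ‖u‖ ^ 2) * N / (2 * α) + (1 - ‖u‖))) := by
    have hRs : α * (R * ((1 - ‖u‖ ^ 2) * N / (2 * α) + (1 - ‖u‖))) = l * (N - N') := by
      rw [hlR]; field_simp; rw [hα]; ring
    rw [hRs, hα]
    linear_combination (1 / 2 : ℝ) * (hsum.trans hmin)
  exact (le_of_mul_le_mul_left hαD hα0).trans (mul_le_mul_of_nonneg_left (le_max_right _ _) hR0)

/-- Euclidean case of Lemma A.4 with the explicit constant from its proof: corrupting at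
most `N' = ⌈(1 − β)N/2⌉ − 1` of the data points moves any sample `u`-quantile by at most
`R · max {2, (1 − β²)N/(2α) + (1 − β)}`, where `l = maxᵢ ρ_u(Xᵢ, q̂)`, `R = l/(1 − β)`
and `α = (1 − β)N/2 − N'`.  Hence the breakdown point of any sample `u`-quantile
function is at least `⌈(1 − β)N/2⌉/N`. -/
theorem sample_quantile_breakdown_lower_bound
    {n : ℕ} (N : ℕ) [NeZero N]
    (u : EuclideanSpace ℝ (Fin n)) (β : ℝ) (hβ : β = ‖u‖) (hu : β < 1)
    (N' : ℕ) (hN' : N' = ⌈(1 - β) * N / 2⌉₊ - 1)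
    (α : ℝ) (hα : α = (1 - β) * N / 2 - N')
    (X : Fin N → EuclideanSpace ℝ (Fin n))
    (qhat : EuclideanSpace ℝ (Fin n))
    (hqhat : ∀ p : EuclideanSpace ℝ (Fin n),
      (N : ℝ)⁻¹ * ∑ i, quantileLoss u (X i) qhat
        ≤ (N : ℝ)⁻¹ * ∑ i, quantileLoss u (X i) p)
    (l R : ℝ) (hl : l = ⨆ i, quantileLoss u (X i) qhat) (hR : R = l / (1 - β))
    (Y : Fin N → EuclideanSpace ℝ (Fin n))
    (hY : Set.ncard {i : Fin N | Y i ≠ X i} ≤ N')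
    (qhat' : EuclideanSpace ℝ (Fin n))
    (hqhat' : ∀ p : EuclideanSpace ℝ (Fin n),
      (N : ℝ)⁻¹ * ∑ i, quantileLoss u (Y i) qhat'
        ≤ (N : ℝ)⁻¹ * ∑ i, quantileLoss u (Y i) p) :
    ‖qhat - qhat'‖ ≤ R * max 2 ((1 - β ^ 2) * N / (2 * α) + (1 - β)) :=
  sample_quantile_breakdown_lower_bound_general N u β hβ hu N' hN' α hα X qhat l R hl hR Y hY qhat'
    hqhat'
end
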